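/- arXiv:1907.12536 — 5 statements merged into one kernel-verified Lean document; each statement's English description precedes it below -/
import Mathlib

section
/- Let f be a polynomial vector field on ℂ^n, let K = ℂ(x_1,…,x_n), let L be a field extension of K equipped with a derivation D extending X_f, and let σ ∈ L be nonconstant, algebraic over K, and satisfy D(σ) = μ·σ for some polynomial μ. Write T^m + β_1 T^{m−1} + ⋯ + β_m ∈ K[T] for the minimal polynomial of σ. Then for every index k with β_k ≠ 0 one has X_f(β_k) = k·μ·β_k. -/
/-!
Differentiating `P(σ) = 0` for the minimal polynomial `P` of `σ` and using `D σ = μ σ` shows that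
`σ` is a root of `P^D + μ (X P' - m P)`, where `P^D` is `P` with `D` applied to its coefficients.
Since `P` is monic of degree `m`, this polynomial has degree `< m`, so it vanishes; its
`(m - k)`-th coefficient is `D β_k - k μ β_k`.
-/

open MvPolynomial

noncomputable section

/-- The rational function field `K = ℂ(x_1,…,x_n)`. -/
abbrev RatFunField (n : ℕ) : Type := FractionRing (MvPolynomial (Fin n) ℂ)

/-- The Lie derivative (derivation) `X_f(ψ) = Σ_k f_k · ∂ψ/∂x_k` associated to the
polynomial vector field `f` on `ℂ^n`. -/
def lieD (n : ℕ) (f : Fin n → MvPolynomial (Fin n) ℂ) (ψ : MvPolynomial (Fin n) ℂ) :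
    MvPolynomial (Fin n) ℂ :=
  ∑ k, f k * pderiv k ψ

open Polynomial

namespace Polynomial

theorem coeff_X_mul_derivative {R : Type*} [Semiring R] (p : R[X]) (i : ℕ) :
    (X * derivative p).coeff i = i * p.coeff i := by
  cases i with
  | zero => simp
  | succ i => rw [coeff_X_mul, coeff_derivative, ← Nat.cast_succ, Nat.cast_comm]

end Polynomial

namespace Derivation

variable {K L : Type*} [Field K] [CommRing L] [Algebra K L]
  {dK : Derivation ℤ K K} {dL : Derivation ℤ L L}

theorem apply_aeval_eq_aeval_mapCoeffs
    (hd : ∀ a, dL (algebraMap K L a) = algebraMap K L (dK a)) (x : L) (p : K[X]) :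
    dL (aeval x p) = aeval x (PolynomialModule.equivPolynomialSelf (dK.mapCoeffs p)) +
      aeval x (derivative p) * dL x := by
  convert! dK.apply_aeval_eq' dL (Algebra.linearMap K L) (fun a => (hd a).symm) x p
  simp

theorem apply_coeff_minpoly_of_apply_eq_mul
    (hd : ∀ a, dL (algebraMap K L a) = algebraMap K L (dK a)) {x : L} (hx : IsIntegral K x)
    {a : K} (h : dL x = algebraMap K L a * x) (i : ℕ) :
    dK ((minpoly K x).coeff i) =
      ((minpoly K x).natDegree - i : K) * a * (minpoly K x).coeff i := by
  set P := minpoly K x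
  set m := P.natDegree
  set Q : K[X] := PolynomialModule.equivPolynomialSelf (dK.mapCoeffs P) +
    Polynomial.C a * (Polynomial.X * derivative P - Polynomial.C (m : K) * P)
  have coeff_Q (j : ℕ) : Q.coeff j = dK (P.coeff j) + a * (j * P.coeff j - m * P.coeff j) := by
    simp only [Q, Polynomial.coeff_add, Polynomial.coeff_C_mul, Polynomial.coeff_sub,
      coeff_X_mul_derivative]
    rfl
  have aeval_P : aeval x P = 0 := minpoly.aeval K x
  have aeval_Q : aeval x Q = 0 := by
    have hP := apply_aeval_eq_aeval_mapCoeffs hd x P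
    rw [aeval_P, map_zero, h] at hP
    simp only [Q, map_add, map_mul, map_sub, Polynomial.aeval_C, Polynomial.aeval_X, aeval_P]
    linear_combination -hP
  have degree_Q : Q.degree < P.degree := by
    rw [degree_eq_natDegree (minpoly.ne_zero hx), degree_lt_iff_coeff_zero]
    intro j hj
    rcases hj.eq_or_lt with rfl | hj
    · simp [coeff_Q, P, m, (minpoly.monic hx).coeff_natDegree]
    · simp [coeff_Q, P, coeff_eq_zero_of_natDegree_lt hj]
  have Q_eq_zero : Q = 0 := eq_zero_of_dvd_of_degree_lt (minpoly.dvd K x aeval_Q) degree_Q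
  have coeff_i := coeff_Q i
  rw [Q_eq_zero, Polynomial.coeff_zero] at coeff_i
  linear_combination -coeff_i

end Derivation

theorem stmt1_general (n : ℕ)
    (L : Type) [Field L] [Algebra (RatFunField n) L]
    (DK : Derivation ℤ (RatFunField n) (RatFunField n))
    (DL : Derivation ℤ L L)
    (hDL : ∀ a : RatFunField n,
      DL (algebraMap (RatFunField n) L a) = algebraMap (RatFunField n) L (DK a))
    (σ : L) (halg : IsAlgebraic (RatFunField n) σ)
    (μ : MvPolynomial (Fin n) ℂ)
    (hσ : DL σ =
      algebraMap (RatFunField n) L (algebraMap (MvPolynomial (Fin n) ℂ) (RatFunField n) μ) * σ) :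
    ∀ k : ℕ, 1 ≤ k → k ≤ (minpoly (RatFunField n) σ).natDegree →
      (minpoly (RatFunField n) σ).coeff ((minpoly (RatFunField n) σ).natDegree - k) ≠ 0 →
      DK ((minpoly (RatFunField n) σ).coeff ((minpoly (RatFunField n) σ).natDegree - k)) =
        (k : RatFunField n) * algebraMap (MvPolynomial (Fin n) ℂ) (RatFunField n) μ *
          (minpoly (RatFunField n) σ).coeff ((minpoly (RatFunField n) σ).natDegree - k) := by
  intro k _ hk _
  -- `DK` carries the `ℤ`-algebra structure of `FractionRing`, which is not defeq to the generic one.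
  let DK' := @Derivation.mk' ℤ _ (RatFunField n) _ (Ring.toIntAlgebra _) _ _ _ _
    DK.toLinearMap.toAddMonoidHom.toIntLinearMap DK.leibniz
  have key := Derivation.apply_coeff_minpoly_of_apply_eq_mul (dK := DK') hDL halg.isIntegral hσ
    ((minpoly (RatFunField n) σ).natDegree - k)
  rwa [Nat.cast_sub hk, sub_sub_cancel] at key

/-- If `σ`, lying in a field extension `L` of `K = ℂ(x_1,…,x_n)` with a derivation `DL`
extending the extension `DK` of `X_f` to `K`, is nonconstant, algebraic over `K`, and
satisfies `DL σ = μ·σ` for a polynomial `μ`, and `T^m + β_1 T^{m-1} + ⋯ + β_m` is the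
minimal polynomial of `σ` over `K`, then every nonzero coefficient `β_k` satisfies
`X_f(β_k) = k·μ·β_k`. -/
theorem stmt1 (n : ℕ) (f : Fin n → MvPolynomial (Fin n) ℂ)
    (L : Type) [Field L] [Algebra (RatFunField n) L]
    (DK : Derivation ℤ (RatFunField n) (RatFunField n))
    (hDK : ∀ p : MvPolynomial (Fin n) ℂ,
      DK (algebraMap (MvPolynomial (Fin n) ℂ) (RatFunField n) p) =
        algebraMap (MvPolynomial (Fin n) ℂ) (RatFunField n) (lieD n f p))
    (DL : Derivation ℤ L L)
    (hDL : ∀ a : RatFunField n,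
      DL (algebraMap (RatFunField n) L a) = algebraMap (RatFunField n) L (DK a))
    (σ : L) (halg : IsAlgebraic (RatFunField n) σ)
    (hnc : ∀ c : ℂ, σ ≠ algebraMap (RatFunField n) L
      (algebraMap (MvPolynomial (Fin n) ℂ) (RatFunField n) (C c)))
    (μ : MvPolynomial (Fin n) ℂ)
    (hσ : DL σ =
      algebraMap (RatFunField n) L (algebraMap (MvPolynomial (Fin n) ℂ) (RatFunField n) μ) * σ) :
    ∀ k : ℕ, 1 ≤ k → k ≤ (minpoly (RatFunField n) σ).natDegree →
      (minpoly (RatFunField n) σ).coeff ((minpoly (RatFunField n) σ).natDegree - k) ≠ 0 →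
      DK ((minpoly (RatFunField n) σ).coeff ((minpoly (RatFunField n) σ).natDegree - k)) =
        (k : RatFunField n) * algebraMap (MvPolynomial (Fin n) ℂ) (RatFunField n) μ *
          (minpoly (RatFunField n) σ).coeff ((minpoly (RatFunField n) σ).natDegree - k) :=
  stmt1_general n L DK DL hDL σ halg μ hσ
end
end

section
/- Let φ ∈ ℂ[x_1,…,x_n] be an irreducible polynomial with φ(0) = 0. Then, viewed as an element of the formal power series ring ℂ[[x_1,…,x_n]], φ is not divisible by the square of any non-invertible power series; equivalently, every irreducible factor of φ in ℂ[[x_1,…,x_n]] occurs with multiplicity one. -/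
/-!
Suppose `ψ² ∣ φ` in `ℂ[[x]]`; then `ψ` divides `φ` and every `∂φ/∂xᵢ`. Viewed as a polynomial in
`xᵢ` over `ℂ[xⱼ : j ≠ i]`, `φ` is either free of `xᵢ` or, by Gauss's lemma, irreducible and hence
separable over the fraction field; in the latter case the resultant of `φ` and `∂φ/∂xᵢ` is a
nonzero combination `a φ + b ∂φ/∂xᵢ` free of `xᵢ`. Either way `ψ` divides a nonzero polynomial
`dᵢ` free of `xᵢ`. The lexicographically least exponent of `ψ` is a summand of that of `dᵢ`, so
its `i`-th entry vanishes for every `i`: it is `0`, and `ψ` is a unit.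
-/

open MvPolynomial

namespace Polynomial

variable {R : Type*} [CommRing R] [IsDomain R]

theorem exists_C_mem_span_derivative [IsGCDMonoid R] [CharZero R] {f : R[X]}
    (hf : Irreducible f) : ∃ r ≠ 0, C r ∈ Ideal.span {f, derivative f} := by
  by_cases hdeg : f.natDegree = 0
  · have hf_eq := eq_C_of_natDegree_eq_zero hdeg
    refine ⟨f.coeff 0, fun h ↦ hf.ne_zero ?_, Ideal.subset_span (by simp [← hf_eq])⟩
    rw [hf_eq, h, C_0]
  have hinj := IsFractionRing.injective R (FractionRing R)
  have hsep : (f.map (algebraMap R (FractionRing R))).Separable :=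
    ((hf.isPrimitive hdeg).irreducible_iff_irreducible_map_fraction_map.mp hf).separable
  have hres : f.resultant (derivative f) ≠ 0 := by
    have := resultant_ne_zero _ _ hsep
    rwa [derivative_map, natDegree_map_eq_of_injective hinj, natDegree_map_eq_of_injective hinj,
      resultant_map_map, map_ne_zero_iff _ hinj] at this
  obtain ⟨p, q, -, -, h⟩ :=
    exists_mul_add_mul_eq_C_resultant f (derivative f) le_rfl le_rfl (.inl hdeg)
  exact ⟨_, hres, Ideal.mem_span_pair.mpr ⟨p, q, by rw [← h]; ring⟩⟩

end Polynomial

namespace MvPolynomial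

variable {σ R S : Type*} [CommSemiring R]

theorem optionEquivLeft_pderiv_none (p : MvPolynomial (Option S) R) :
    optionEquivLeft R S (pderiv none p) = Polynomial.derivative (optionEquivLeft R S p) := by
  induction p using MvPolynomial.induction_on with
  | C a => simp [optionEquivLeft_C]
  | add p q hp hq => simp [hp, hq]
  | mul_X p j hp =>
    cases j with
    | none => simp [hp, optionEquivLeft_X_none]; ring
    | some j => simp [hp, optionEquivLeft_X_some]; ring

theorem exists_degreeOf_eq_zero_mem_span_pderiv {k : Type*} [Field k] [CharZero k]
    {φ : MvPolynomial σ k} (hφ : Irreducible φ) (i : σ) :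
    ∃ d ∈ Ideal.span {φ, pderiv i φ}, d ≠ 0 ∧ degreeOf i d = 0 := by
  classical
  let e := (Equiv.optionSubtypeNe i).symm
  let F := (renameEquiv k e).trans (optionEquivLeft k {j // j ≠ i})
  have hF : ∀ p, F (pderiv i p) = Polynomial.derivative (F p) := fun p ↦ by
    have hei : e i = none := Equiv.optionSubtypeNe_symm_self i
    simp only [F, AlgEquiv.trans_apply, renameEquiv_apply, ← pderiv_rename e.injective, hei,
      optionEquivLeft_pderiv_none]
  obtain ⟨r, hr, hmem⟩ :=
    Polynomial.exists_C_mem_span_derivative ((MulEquiv.irreducible_iff F).mpr hφ)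
  obtain ⟨a, b, hab⟩ := Ideal.mem_span_pair.mp hmem
  refine ⟨F.symm (Polynomial.C r), Ideal.mem_span_pair.mpr ⟨F.symm a, F.symm b, ?_⟩, ?_, ?_⟩
  · apply F.injective
    simp [hF, hab]
  · simpa using hr
  · rw [degreeOf_eq_natDegree]
    change (F (F.symm (Polynomial.C r))).natDegree = 0
    simp

end MvPolynomial

namespace MvPowerSeries

variable {σ R : Type*} [CommSemiring R]

theorem dvd_pderiv_of_mul_self_dvd {ψ f : MvPowerSeries σ R} (h : ψ * ψ ∣ f) (i : σ) :
    ψ ∣ pderiv R i f := by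
  obtain ⟨g, rfl⟩ := h
  refine ⟨ψ * pderiv R i g + 2 * g * pderiv R i ψ, ?_⟩
  simp only [Derivation.leibniz, smul_eq_mul]
  ring

theorem dvd_coe_of_mem_span_pderiv {φ : MvPolynomial σ R} {ψ : MvPowerSeries σ R}
    (hψ : ψ * ψ ∣ φ) {i : σ} {d : MvPolynomial σ R}
    (hd : d ∈ Ideal.span {φ, MvPolynomial.pderiv i φ}) : ψ ∣ (d : MvPowerSeries σ R) := by
  obtain ⟨a, b, rfl⟩ := Ideal.mem_span_pair.mp hd
  push_cast
  rw [← pderiv_coe]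
  exact dvd_add (((dvd_mul_right ψ ψ).trans hψ).mul_left _)
    ((dvd_pderiv_of_mul_self_dvd hψ i).mul_left _)

theorem apply_eq_zero_of_lexOrder_eq_of_dvd [LinearOrder σ] [WellFoundedGT σ] [NoZeroDivisors R]
    {ψ f : MvPowerSeries σ R} {e : σ →₀ ℕ} (he : lexOrder ψ = toLex e) (hdvd : ψ ∣ f)
    (hf : f ≠ 0) {i : σ} (hfi : ∀ m, coeff m f ≠ 0 → m i = 0) : e i = 0 := by
  obtain ⟨c, rfl⟩ := hdvd
  obtain ⟨e', he'⟩ := exists_finsupp_eq_lexOrder_of_ne_zero (right_ne_zero_of_mul hf)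
  have hmul : lexOrder (ψ * c) = toLex (e + e') := by
    rw [lexOrder_mul, he, he']
    rfl
  have := hfi _ (coeff_ne_zero_of_lexOrder hmul.symm)
  simp only [Finsupp.add_apply, Nat.add_eq_zero_iff] at this
  exact this.1

end MvPowerSeries

open MvPowerSeries in
theorem stmt2_general (n : ℕ) (φ : MvPolynomial (Fin n) ℂ)
    (hirr : Irreducible φ) :
    Squarefree (↑φ : MvPowerSeries (Fin n) ℂ) := by
  intro ψ hψ
  have hψ0 : ψ ≠ 0 := by
    rintro rfl
    simp [hirr.ne_zero] at hψ
  obtain ⟨e, he⟩ := exists_finsupp_eq_lexOrder_of_ne_zero hψ0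
  suffices e = 0 by
    rw [isUnit_iff_constantCoeff, ← coeff_zero_eq_constantCoeff_apply, ← this]
    exact (coeff_ne_zero_of_lexOrder he.symm).isUnit
  ext i
  obtain ⟨d, hd, hd0, hdi⟩ := exists_degreeOf_eq_zero_mem_span_pderiv hirr i
  refine apply_eq_zero_of_lexOrder_eq_of_dvd he (dvd_coe_of_mem_span_pderiv hψ hd)
    (MvPolynomial.coe_eq_zero_iff.not.mpr hd0) fun m hm ↦ ?_
  rw [MvPolynomial.coeff_coe, ← MvPolynomial.mem_support_iff] at hm
  exact Nat.le_zero.mp (hdi ▸ monomial_le_degreeOf i hm)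

/-- An irreducible polynomial `φ ∈ ℂ[x_1,…,x_n]` with `φ(0) = 0` is squarefree as an
element of the formal power series ring `ℂ[[x_1,…,x_n]]`: every irreducible factor of
`φ` in `ℂ[[x_1,…,x_n]]` occurs with multiplicity one. -/
theorem stmt2 (n : ℕ) (φ : MvPolynomial (Fin n) ℂ)
    (hirr : Irreducible φ)
    (h0 : eval (0 : Fin n → ℂ) φ = 0) :
    Squarefree (↑φ : MvPowerSeries (Fin n) ℂ) :=
  stmt2_general n φ hirr
end

section
/- Let ψ_1, ψ_2 ∈ ℂ[x_1,…,x_n] be relatively prime polynomials with ψ_1(0) = ψ_2(0) = 0. Then ψ_1 and ψ_2 have no common non-invertible divisor in the formal power series ring ℂ[[x_1,…,x_n]]; in particular their prime factorizations in ℂ[[x_1,…,x_n]] share no common irreducible factor. -/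
/-!
`ℂ[[x]]` is the `(x)`-adic completion of the Noetherian ring `ℂ[x]`, hence flat over it. Over a
flat extension `R → S` every relation `a • x = b • y` is an `S`-combination of relations over `R`;
when `a` and `b` are relatively prime in the UFD `R`, each of those has its `x`-entry divisible
by `b`, so `b ∣ x` in `S`. Applied to the cofactors of a common divisor `d` of `a` and
`b` in `S`, this forces `d` to be a unit.
-/

open MvPolynomial

noncomputable section

instance MvPowerSeries.instFlatMvPolynomial (σ R : Type*) [Finite σ] [CommRing R]
    [IsNoetherianRing R] : Module.Flat (MvPolynomial σ R) (MvPowerSeries σ R) :=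
  Module.Flat.of_linearEquiv (MvPowerSeries.toAdicCompletionAlgEquiv σ R).toLinearEquiv

section Flat

variable {R S : Type*} [CommRing R] [DecompositionMonoid R] [CommRing S] [Algebra R S]
  [Module.Flat R S]

theorem IsRelPrime.algebraMap_dvd_of_mul_eq_mul {a b : R} (h : IsRelPrime a b) {x y : S}
    (hxy : algebraMap R S a * x = algebraMap R S b * y) : algebraMap R S b ∣ x := by
  have hrel : ∑ i, ![a, -b] i • ![x, y] i = 0 := by
    simp [Algebra.smul_def, hxy]
  obtain ⟨k, c, z, hx, hc⟩ :=
    Module.Flat.isTrivialRelation_of_sum_smul_eq_zero (R := R) (f := ![a, -b]) (x := ![x, y]) hrel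
  have hb : ∀ j, b ∣ c 0 j := fun j =>
    h.symm.dvd_of_dvd_mul_left ⟨c 1 j, by simpa [add_neg_eq_zero] using hc j⟩
  rw [show x = ∑ j, c 0 j • z j by simpa using hx 0]
  refine Finset.dvd_sum fun j _ => ?_
  obtain ⟨e, he⟩ := hb j
  exact ⟨algebraMap R S e * z j, by rw [Algebra.smul_def, he, map_mul, mul_assoc]⟩

theorem IsRelPrime.algebraMap_of_flat [IsDomain R] [IsDomain S] {a b : R} (h : IsRelPrime a b) :
    IsRelPrime (algebraMap R S a) (algebraMap R S b) := by
  rcases eq_or_ne a 0 with rfl | ha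
  · exact ((isRelPrime_zero_left.mp h).map _).isRelPrime_right
  have hfa : algebraMap R S a ≠ 0 :=
    (map_ne_zero_iff _ (FaithfulSMul.algebraMap_injective R S)).mpr ha
  rintro d ⟨a', hda⟩ ⟨b', hdb⟩
  have hd : d ≠ 0 := left_ne_zero_of_mul (hda ▸ hfa)
  have hrel : algebraMap R S b * a' = algebraMap R S a * b' :=
    mul_left_cancel₀ hd (by rw [hdb, hda]; ring)
  obtain ⟨e, he⟩ := h.symm.algebraMap_dvd_of_mul_eq_mul hrel
  refine .of_mul_eq_one e (mul_left_cancel₀ hfa ?_)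
  linear_combination -hda - d * he

end Flat

theorem stmt3_general (n : ℕ) (ψ₁ ψ₂ : MvPolynomial (Fin n) ℂ)
    (hrp : IsRelPrime ψ₁ ψ₂) :
    IsRelPrime (↑ψ₁ : MvPowerSeries (Fin n) ℂ) (↑ψ₂ : MvPowerSeries (Fin n) ℂ) := by
  have := NoZeroDivisors.to_isDomain (MvPowerSeries (Fin n) ℂ)
  exact hrp.algebraMap_of_flat

/-- Relatively prime polynomials `ψ_1, ψ_2 ∈ ℂ[x_1,…,x_n]` with `ψ_1(0) = ψ_2(0) = 0`
remain relatively prime in the formal power series ring `ℂ[[x_1,…,x_n]]`: every common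
divisor there is invertible, i.e. their prime factorizations share no irreducible factor. -/
theorem stmt3 (n : ℕ) (ψ₁ ψ₂ : MvPolynomial (Fin n) ℂ)
    (hrp : IsRelPrime ψ₁ ψ₂)
    (h1 : eval (0 : Fin n → ℂ) ψ₁ = 0)
    (h2 : eval (0 : Fin n → ℂ) ψ₂ = 0) :
    IsRelPrime (↑ψ₁ : MvPowerSeries (Fin n) ℂ) (↑ψ₂ : MvPowerSeries (Fin n) ℂ) :=
  stmt3_general n ψ₁ ψ₂ hrp
end
end

section
/- Let ψ ∈ ℂ[x_1,…,x_n] be an irreducible polynomial of degree r whose degree-r homogeneous part satisfies ψ^{(r)}(e_1) = 0, where e_1 = (1,0,…,0). Then the Poincaré transform ψ*_{e_1} is an irreducible polynomial in ℂ[x_2,…,x_{n+1}]. -/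
open MvPolynomial

noncomputable section

/-- The Poincaré transform `ψ*_{e_1}` of a polynomial `ψ ∈ ℂ[x_1,…,x_n]` of degree `r`:
`ψ*_{e_1}(x_2,…,x_{n+1}) = Σ_{j=0}^r ψ^{(j)}(1,x_2,…,x_n)·x_{n+1}^{r-j}`.
Here the variables `x_1,…,x_{ n+1}` are indexed by `Fin (n+1)` (the variable with index `0`,
corresponding to `x_1`, does not occur, so the result lies in `ℂ[x_2,…,x_{n+1}]`). -/
def poincareT (n r : ℕ) (ψ : MvPolynomial (Fin n) ℂ) : MvPolynomial (Fin (n + 1)) ℂ :=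
  ∑ j ∈ Finset.range (r + 1),
    aeval (fun i : Fin n => if (i : ℕ) = 0 then 1 else X i.castSucc)
        (homogeneousComponent j ψ) *
      X (Fin.last n) ^ (r - j)

/-- The point `e_1 = (1,0,…,0) ∈ ℂ^n`. -/
def e1vec (n : ℕ) : Fin n → ℂ := fun i => if (i : ℕ) = 0 then 1 else 0

/-!
Homogenize `ψ` in a new variable `x_{n+1}` to a form `Φ` of degree `r`: setting `x_{n+1} = 1`
in `Φ` gives back `ψ`, setting `x_1 = 1` gives `ψ*_{e_1}`. A factorization `ψ* = f g`
homogenizes in `x_1` to `Φ = x_1^k F G`. Setting `x_{n+1} = 1`, irreducibility of `ψ` and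
`x_1 ∤ ψ` (which is what `ψ^{(r)}(e_1) = 0` guarantees) force `k = 0` and, say,
`F(x_{n+1} = 1)` constant, so `F = c x_{n+1}^d`. Since `Φ(x_{n+1} = 0) = ψ^{(r)} ≠ 0`,
`x_{n+1} ∤ Φ`, hence `d = 0` and `f` is a unit.
-/

namespace MvPolynomial

open Finset

section CommSemiring

variable {σ R : Type*} [CommSemiring R]

theorem homogeneousComponent_totalDegree_ne_zero {φ : MvPolynomial σ R} (h : φ ≠ 0) :
    homogeneousComponent φ.totalDegree φ ≠ 0 := by
  obtain ⟨d, hd, hdeg⟩ := exists_mem_eq_sup φ.support (support_nonempty.mpr h)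
    fun s => s.sum fun _ e => e
  rw [Ne, ← support_eq_empty, support_homogeneousComponent, filter_eq_empty_iff]
  exact fun hne => hne hd hdeg.symm

def homogenize (v : σ) (N : ℕ) : MvPolynomial σ R →ₗ[R] MvPolynomial σ R :=
  ∑ j ∈ range (N + 1), LinearMap.mulRight R (X v ^ (N - j)) ∘ₗ homogeneousComponent j

variable (v : σ) {N : ℕ}

theorem _root_.Finsupp.degree_erase_add (u : σ →₀ ℕ) :
    (u.erase v).degree + u v = u.degree := by
  conv_rhs => rw [← Finsupp.erase_add_single v u]
  rw [map_add, Finsupp.degree_single]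

theorem homogenize_apply (N : ℕ) (φ : MvPolynomial σ R) :
    homogenize v N φ = ∑ j ∈ range (N + 1), homogeneousComponent j φ * X v ^ (N - j) := by
  simp [homogenize]

theorem isHomogeneous_homogenize (N : ℕ) (φ : MvPolynomial σ R) :
    (homogenize v N φ).IsHomogeneous N := by
  rw [homogenize_apply]
  refine IsHomogeneous.sum _ _ _ fun j hj => ?_
  have h := (homogeneousComponent_isHomogeneous j φ).mul (isHomogeneous_X_pow v (N - j))
  rwa [Nat.add_sub_cancel' (Nat.lt_succ_iff.mp (mem_range.mp hj))] at h

theorem homogenize_monomial {u : σ →₀ ℕ} (c : R) (h : u.degree ≤ N) :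
    homogenize v N (monomial u c) = monomial u c * X v ^ (N - u.degree) := by
  rw [homogenize_apply, sum_eq_single_of_mem u.degree (mem_range.mpr (Nat.lt_succ_of_le h))]
  · rw [homogeneousComponent_eq_self (isHomogeneous_monomial c rfl)]
  · intro j _ hj
    rw [homogeneousComponent_of_mem (isHomogeneous_monomial c rfl), if_neg hj, zero_mul]

theorem homogenize_C (N : ℕ) (c : R) : homogenize v N (C c) = C c * X v ^ N := by
  simpa using homogenize_monomial v (u := 0) c (Nat.zero_le N)

theorem homogenize_mul {a b : ℕ} {φ ψ : MvPolynomial σ R}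
    (ha : φ.totalDegree ≤ a) (hb : ψ.totalDegree ≤ b) :
    homogenize v (a + b) (φ * ψ) = homogenize v a φ * homogenize v b ψ := by
  rw [φ.as_sum, ψ.as_sum, sum_mul_sum]
  simp only [map_sum, sum_mul_sum]
  refine sum_congr rfl fun u hu => sum_congr rfl fun w hw => ?_
  have hua : u.degree ≤ a := (le_totalDegree hu).trans ha
  have hwb : w.degree ≤ b := (le_totalDegree hw).trans hb
  rw [monomial_mul, homogenize_monomial v _ (by rw [map_add]; omega),
    homogenize_monomial v _ hua, homogenize_monomial v _ hwb, map_add,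
    show a + b - (u.degree + w.degree) = (a - u.degree) + (b - w.degree) by omega,
    pow_add, ← monomial_mul]
  ring

theorem homogenize_eq_X_pow_mul {c : ℕ} {φ : MvPolynomial σ R}
    (hφ : φ.totalDegree ≤ c) (hcN : c ≤ N) :
    homogenize v N φ = X v ^ (N - c) * homogenize v c φ := by
  obtain ⟨k, rfl⟩ := Nat.exists_eq_add_of_le hcN
  rw [Nat.add_sub_cancel_left]
  have h := homogenize_mul v hφ (show (1 : MvPolynomial σ R).totalDegree ≤ k by simp)
  rwa [mul_one, ← C_1, homogenize_C, C_1, one_mul, mul_comm] at h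

theorem X_dvd_rename_iff {τ : Type*} {f : τ → σ} (hf : Function.Injective f) (i : τ)
    (p : MvPolynomial τ R) : X (f i) ∣ rename f p ↔ X i ∣ p := by
  refine ⟨fun h => ?_, fun h => rename_X (R := R) f i ▸ map_dvd (rename f) h⟩
  rw [← rename_X (R := R) f i] at h
  simpa only [killCompl_rename_app] using map_dvd (killCompl hf) h

variable [DecidableEq σ]

def dehomogenize : MvPolynomial σ R →ₐ[R] MvPolynomial σ R :=
  aeval (Function.update X v 1)

@[simp]
theorem dehomogenize_X_self : dehomogenize v (X v : MvPolynomial σ R) = 1 := by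
  simp [dehomogenize]

@[simp]
theorem dehomogenize_X_of_ne {i : σ} (h : i ≠ v) :
    dehomogenize v (X i : MvPolynomial σ R) = X i := by
  simp [dehomogenize, h]

theorem dehomogenize_monomial (u : σ →₀ ℕ) (c : R) :
    dehomogenize v (monomial u c) = monomial (u.erase v) c := by
  have hu : monomial u c = monomial (u.erase v) c * X v ^ u v := by
    rw [X_pow_eq_monomial, monomial_mul, mul_one, Finsupp.erase_add_single]
  rw [hu, map_mul, map_pow, dehomogenize_X_self, one_pow, mul_one, dehomogenize, aeval_monomial,
    monomial_eq, algebraMap_eq]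
  congr 1
  refine Finsupp.prod_congr fun i hi => ?_
  rw [Function.update_of_ne (by rintro rfl; simp at hi)]

theorem totalDegree_dehomogenize_le (φ : MvPolynomial σ R) :
    (dehomogenize v φ).totalDegree ≤ φ.totalDegree := by
  conv_lhs => rw [φ.as_sum]
  rw [map_sum]
  refine (totalDegree_finsetSum _ _).trans (Finset.sup_le fun u hu => ?_)
  rw [dehomogenize_monomial]
  refine (totalDegree_monomial_le _ _).trans (le_trans ?_ (le_totalDegree hu))
  exact (Nat.le_add_right _ _).trans_eq (Finsupp.degree_erase_add v u)

theorem homogenize_dehomogenize {φ : MvPolynomial σ R} (hφ : φ.IsHomogeneous N) :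
    homogenize v N (dehomogenize v φ) = φ := by
  conv_lhs => rw [φ.as_sum]
  conv_rhs => rw [φ.as_sum]
  rw [map_sum, map_sum]
  refine sum_congr rfl fun u hu => ?_
  have hud : u.degree = N := by
    by_contra hne
    exact mem_support_iff.mp hu (hφ.coeff_eq_zero hne)
  have herase := Finsupp.degree_erase_add v u
  rw [dehomogenize_monomial, homogenize_monomial v _ (by omega),
    show N - (u.erase v).degree = u v by omega,
    X_pow_eq_monomial, monomial_mul, mul_one, Finsupp.erase_add_single]

theorem dehomogenize_homogenize {φ : MvPolynomial σ R} (h : φ.totalDegree ≤ N) :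
    dehomogenize v (homogenize v N φ) = dehomogenize v φ := by
  rw [homogenize_apply, map_sum]
  simp only [map_mul, map_pow, dehomogenize_X_self, one_pow, mul_one]
  rw [← map_sum, ← sum_subset (range_subset_range.mpr (Nat.succ_le_succ h))
    fun j _ hj => homogeneousComponent_eq_zero j φ (by simp only [mem_range] at hj; omega),
    sum_homogeneousComponent]

theorem aeval_update_rename {τ : Type*} {f : τ → σ} (hf : ∀ i, f i ≠ v)
    (a : MvPolynomial σ R) (p : MvPolynomial τ R) :
    aeval (Function.update X v a) (rename f p) = rename f p := by
  rw [aeval_rename, rename_eq_aeval]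
  congr 2
  funext i
  exact Function.update_of_ne (hf i) _ _

theorem dehomogenize_homogenize_rename {τ : Type*} {f : τ → σ} (hf : ∀ i, f i ≠ v)
    {φ : MvPolynomial τ R} (h : φ.totalDegree ≤ N) :
    dehomogenize v (homogenize v N (rename f φ)) = rename f φ := by
  rw [dehomogenize_homogenize v ((totalDegree_rename_le f φ).trans h)]
  exact aeval_update_rename v hf 1 φ

theorem aeval_update_zero_homogenize (N : ℕ) (φ : MvPolynomial σ R) :
    aeval (Function.update (X (R := R)) v 0) (homogenize v N φ) =
      aeval (Function.update X v 0) (homogeneousComponent N φ) := by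
  rw [homogenize_apply, map_sum, sum_eq_single_of_mem N (self_mem_range_succ N)]
  · simp
  · intro j hj hne
    have : N - j ≠ 0 := by simp only [mem_range] at hj; omega
    simp [zero_pow this]

theorem not_X_dvd_homogenize_rename {τ : Type*} {f : τ → σ} (hf : Function.Injective f)
    (hv : ∀ i, f i ≠ v) {φ : MvPolynomial τ R} (hφ : homogeneousComponent N φ ≠ 0) :
    ¬ X v ∣ homogenize v N (rename f φ) := by
  rintro ⟨q, hq⟩
  have h := congrArg (aeval (Function.update (X (R := R)) v 0)) hq
  rw [aeval_update_zero_homogenize, ← rename_homogeneousComponent, aeval_update_rename v hv,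
    map_mul, aeval_X, Function.update_self, zero_mul] at h
  exact hφ (rename_injective f hf (by rw [h, map_zero]))

end CommSemiring

theorem prime_rename_of_injective {σ τ R : Type*} [CommRing R] {f : σ → τ}
    (hf : Function.Injective f) {p : MvPolynomial σ R} (hp : Prime p) : Prime (rename f p) := by
  have h : rename f p =
      rename ((↑) : Set.range f → τ) (renameEquiv R (Equiv.ofInjective f hf) p) := by
    rw [renameEquiv_apply, rename_rename]
    rfl
  rw [h, prime_rename_iff]
  exact (MulEquiv.prime_iff _).mpr hp

theorem totalDegree_ne_zero_of_irreducible {σ K : Type*} [Field K] {p : MvPolynomial σ K}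
    (hp : Irreducible p) : p.totalDegree ≠ 0 := by
  intro h
  have hpC := totalDegree_eq_zero_iff_eq_C.mp h
  have hc : coeff 0 p ≠ 0 := fun hc => hp.ne_zero (by rw [hpC, hc, map_zero])
  exact hp.not_isUnit (hpC ▸ hc.isUnit.map C)

section IsDomain

variable {σ R : Type*} [CommRing R] [IsDomain R]

theorem not_X_dvd_of_eval_homogeneousComponent_eq_zero {p : MvPolynomial σ R}
    (hp : Irreducible p) {i : σ} {x : σ → R} (hx : x i ≠ 0)
    (h : eval x (homogeneousComponent p.totalDegree p) = 0) : ¬ X i ∣ p := by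
  rintro ⟨q, rfl⟩
  have hX : ¬ IsUnit (X i : MvPolynomial σ R) := fun hX => by
    simpa using (isUnit_iff_totalDegree_of_isReduced.mp hX).2
  obtain ⟨c, hc, rfl⟩ :=
    isUnit_iff_eq_C_of_isReduced.mp ((hp.isUnit_or_isUnit rfl).resolve_left hX)
  have hhom : (X i * C c : MvPolynomial σ R).IsHomogeneous 1 :=
    (isHomogeneous_X R i).mul (isHomogeneous_C σ c)
  rw [hhom.totalDegree hp.ne_zero, homogeneousComponent_eq_self hhom, eval_mul, eval_X, eval_C] at h
  exact mul_ne_zero hx hc.ne_zero h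

variable [DecidableEq σ] {u v : σ}

theorem isUnit_of_isUnit_dehomogenize_homogenize {p : MvPolynomial σ R}
    (hX : ¬ X v ∣ homogenize u p.totalDegree p)
    (h : IsUnit (dehomogenize v (homogenize u p.totalDegree p))) : IsUnit p := by
  obtain ⟨c, hc, hC⟩ := isUnit_iff_eq_C_of_isReduced.mp h
  have hp : homogenize u p.totalDegree p = C c * X v ^ p.totalDegree := by
    rw [← homogenize_dehomogenize v (isHomogeneous_homogenize u _ p), hC, homogenize_C]
  have hd : p.totalDegree = 0 := by
    by_contra hd
    exact hX (hp ▸ dvd_mul_of_dvd_right (dvd_pow_self _ hd) _)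
  have hpC := totalDegree_eq_zero_iff_eq_C.mp hd
  rw [hd, hpC, homogenize_C, pow_zero, pow_zero, mul_one, mul_one] at hp
  exact hpC ▸ hp ▸ hc.map C

theorem irreducible_dehomogenize_of_irreducible_dehomogenize (huv : u ≠ v) {N : ℕ}
    {Φ : MvPolynomial σ R} (hΦ : Φ.IsHomogeneous N) (hv : ¬ X v ∣ Φ)
    (hirr : Irreducible (dehomogenize v Φ)) (hu : ¬ X u ∣ dehomogenize v Φ) :
    Irreducible (dehomogenize u Φ) := by
  set χ := dehomogenize u Φ
  have hχΦ : homogenize u N χ = Φ := homogenize_dehomogenize u hΦ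
  have hχN : χ.totalDegree ≤ N := (totalDegree_dehomogenize_le u Φ).trans hΦ.totalDegree_le
  have hXu : dehomogenize v (X u : MvPolynomial σ R) = X u := dehomogenize_X_of_ne v huv
  refine ⟨fun hχ => ?_, fun f g hfg => ?_⟩
  · obtain ⟨c, hcu, hc⟩ := isUnit_iff_eq_C_of_isReduced.mp hχ
    have hΦc : dehomogenize v Φ = C c * X u ^ N := by
      rw [← hχΦ, hc, homogenize_C, map_mul, map_pow, hXu, algHom_C, algebraMap_eq]
    rcases eq_or_ne N 0 with hN | hN
    · exact hirr.not_isUnit (by rw [hΦc, hN, pow_zero, mul_one]; exact hcu.map C)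
    · exact hu (hΦc ▸ dvd_mul_of_dvd_right (dvd_pow_self _ hN) _)
  · have hχ0 : χ ≠ 0 := fun h => hirr.ne_zero (by rw [← hχΦ, h, map_zero, map_zero])
    obtain ⟨hf, hg⟩ := mul_ne_zero_iff.mp (hfg ▸ hχ0)
    have hχdeg : χ.totalDegree = f.totalDegree + g.totalDegree :=
      hfg ▸ totalDegree_mul_of_isDomain hf hg
    have hdeg : f.totalDegree + g.totalDegree ≤ N := hχdeg ▸ hχN
    set F := homogenize u f.totalDegree f
    set G := homogenize u g.totalDegree g
    have hsplit : Φ = X u ^ (N - (f.totalDegree + g.totalDegree)) * (F * G) := by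
      rw [← hχΦ, homogenize_eq_X_pow_mul u hχdeg.le hdeg, hfg, homogenize_mul u le_rfl le_rfl]
    have hN : N = f.totalDegree + g.totalDegree := by
      by_contra hN
      apply hu
      rw [hsplit, map_mul, map_pow, hXu]
      exact dvd_mul_of_dvd_left (dvd_pow_self _ (by omega)) _
    rw [hN, Nat.sub_self, pow_zero, one_mul] at hsplit
    have hFG : dehomogenize v Φ = dehomogenize v F * dehomogenize v G := by rw [hsplit, map_mul]
    refine (hirr.isUnit_or_isUnit hFG).imp (isUnit_of_isUnit_dehomogenize_homogenize fun h => hv ?_)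
      (isUnit_of_isUnit_dehomogenize_homogenize fun h => hv ?_)
    · exact hsplit ▸ h.mul_right G
    · exact hsplit ▸ h.mul_left F

end IsDomain

end MvPolynomial

theorem poincareT_eq_dehomogenize (n r : ℕ) (ψ : MvPolynomial (Fin (n + 1)) ℂ) :
    poincareT (n + 1) r ψ =
      dehomogenize 0 (homogenize (Fin.last (n + 1)) r (rename Fin.castSucc ψ)) := by
  rw [poincareT, homogenize_apply, map_sum]
  refine Finset.sum_congr rfl fun j _ => ?_
  rw [map_mul, map_pow, dehomogenize_X_of_ne 0 Fin.last_pos.ne', ← rename_homogeneousComponent,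
    dehomogenize, aeval_rename]
  congr 3
  funext i
  by_cases hi : (i : ℕ) = 0 <;> simp [hi, Function.update_apply, Fin.ext_iff]

/-- If `ψ` is an irreducible polynomial of degree `r` whose top homogeneous part vanishes
at `e_1`, then the Poincaré transform `ψ*_{e_1}` is irreducible. -/
theorem stmt5 (n r : ℕ) (ψ : MvPolynomial (Fin n) ℂ)
    (hirr : Irreducible ψ)
    (hdeg : ψ.totalDegree = r)
    (htop : eval (e1vec n) (homogeneousComponent r ψ) = 0) :
    Irreducible (poincareT n r ψ) := by
  have hr : r ≠ 0 := hdeg ▸ totalDegree_ne_zero_of_irreducible hirr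
  obtain ⟨m, rfl⟩ : ∃ m, n = m + 1 := Nat.exists_eq_succ_of_ne_zero fun hn => by
    subst hn
    exact hr (Nat.eq_zero_of_le_zero (hdeg ▸ (isHomogeneous_of_isEmpty _ _ ψ).totalDegree_le))
  have hcs := Fin.castSucc_injective (m + 1)
  have hlast (i : Fin (m + 1)) : i.castSucc ≠ Fin.last (m + 1) := (Fin.castSucc_lt_last i).ne
  have hψ : Irreducible (rename Fin.castSucc ψ) :=
    (prime_rename_of_injective hcs hirr.prime).irreducible
  have hX0 : ¬ X 0 ∣ ψ := not_X_dvd_of_eval_homogeneousComponent_eq_zero hirr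
    (x := e1vec (m + 1)) (by simp [e1vec]) (hdeg ▸ htop)
  rw [poincareT_eq_dehomogenize]
  refine irreducible_dehomogenize_of_irreducible_dehomogenize Fin.last_pos.ne
    (isHomogeneous_homogenize _ r _) (not_X_dvd_homogenize_rename _ hcs hlast ?_) ?_ ?_
  · exact hdeg ▸ homogeneousComponent_totalDegree_ne_zero hirr.ne_zero
  · rwa [dehomogenize_homogenize_rename _ hlast hdeg.le]
  · rwa [dehomogenize_homogenize_rename _ hlast hdeg.le, ← Fin.castSucc_zero,
      X_dvd_rename_iff hcs]
end
end

section
/- Let ψ_1, ψ_2 ∈ ℂ[x_1,…,x_n] be relatively prime polynomials of degrees r_1, r_2 whose top-degree homogeneous parts both vanish at e_1 = (1,0,…,0), i.e., ψ_1^{(r_1)}(e_1) = ψ_2^{(r_2)}(e_1) = 0. Then the Poincaré transforms ψ_1*_{e_1} and ψ_2*_{e_1} are relatively prime in ℂ[x_2,…,x_{n+1}]. -/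
open MvPolynomial

noncomputable section

/-!
Write `u = X 0` and `t = X (Fin.last n)`; the transform `ψ*` does not involve `u`. On the
localization `L = ℂ[X_0,…,X_n][1/(u t)]` the monomial substitution
`τ : u ↦ t, t ↦ u⁻¹, X_j ↦ X_j u⁻¹` is an automorphism, inverse to
`σ : t ↦ u, u ↦ t⁻¹, X_j ↦ X_j t⁻¹`, and `τ` undoes the transform:
`τ(ψ*) = u^{-r} ψ(u, X_1, …, X_{n-1})`.
Relative primality of `ψ₁, ψ₂` survives the passage to `ℂ[X_0,…,X_n]` and then to `L`, so
by `τ` the transforms are relatively prime in `L`. It descends back to `ℂ[X_0,…,X_n]`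
because `ψ*` is divisible neither by `u` nor by `t`, the latter since its value at `t = 0`
is the dehomogenized top-degree part of `ψ`.
-/

theorem MvPolynomial.IsHomogeneous.aeval_mul_left {R S σ : Type*} [CommSemiring R]
    [CommSemiring S] [Algebra R S] {φ : MvPolynomial σ R} {m : ℕ} (hφ : φ.IsHomogeneous m)
    (c : S) (g : σ → S) :
    MvPolynomial.aeval (fun i => c * g i) φ = c ^ m * MvPolynomial.aeval g φ := by
  simp only [aeval_def, eval₂_eq, Finset.mul_sum]
  refine Finset.sum_congr rfl fun d hd => ?_
  simp only [mul_pow, Finset.prod_mul_distrib, Finset.prod_pow_eq_pow_sum,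
    ← hφ.degree_eq_sum_deg_support hd]
  ring

theorem MvPolynomial.sum_homogeneousComponent_of_totalDegree_le {R σ : Type*} [CommSemiring R]
    {φ : MvPolynomial σ R} {r : ℕ} (hr : φ.totalDegree ≤ r) :
    ∑ j ∈ Finset.range (r + 1), homogeneousComponent j φ = φ := by
  rw [← Finset.sum_subset (Finset.range_subset_range.2 (Nat.succ_le_succ hr)),
    sum_homogeneousComponent]
  intro j hj hj'
  simp only [Finset.mem_range] at hj hj'
  exact homogeneousComponent_eq_zero j φ (by omega)

theorem MvPolynomial.homogeneousComponent_totalDegree_ne_zero_s6 {R σ : Type*} [CommSemiring R]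
    {φ : MvPolynomial σ R} (hφ : φ ≠ 0) : homogeneousComponent φ.totalDegree φ ≠ 0 := by
  obtain ⟨d, hd, hdeg⟩ :=
    φ.support.exists_mem_eq_sup (support_nonempty.2 hφ) fun s => s.sum fun _ e => e
  intro h
  have := congrArg (coeff d) h
  rw [coeff_homogeneousComponent, if_pos (by rw [totalDegree, hdeg]; rfl), coeff_zero] at this
  exact mem_support_iff.1 hd this

theorem MvPolynomial.aeval_update_X_zero_of_X_dvd {R σ : Type*} [CommSemiring R]
    [DecidableEq σ] {k : σ} {p : MvPolynomial σ R} (h : X k ∣ p) :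
    aeval (Function.update (X : σ → MvPolynomial σ R) k 0) p = 0 := by
  obtain ⟨q, rfl⟩ := h
  simp

theorem IsRelPrime.polynomial_C {A : Type*} [CommRing A] [IsDomain A] {a b : A}
    (h : IsRelPrime a b) : IsRelPrime (Polynomial.C a) (Polynomial.C b) := by
  intro d hda hdb
  have hd : d = Polynomial.C (d.coeff 0) := by
    refine Polynomial.eq_C_of_natDegree_eq_zero (Nat.le_zero.1 ?_)
    rcases h.ne_zero_or_ne_zero with ha | hb
    · exact (Polynomial.natDegree_le_of_dvd hda (Polynomial.C_ne_zero.2 ha)).trans_eq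
        (Polynomial.natDegree_C _)
    · exact (Polynomial.natDegree_le_of_dvd hdb (Polynomial.C_ne_zero.2 hb)).trans_eq
        (Polynomial.natDegree_C _)
  rw [hd] at hda hdb ⊢
  have hca := map_dvd Polynomial.constantCoeff hda
  have hcb := map_dvd Polynomial.constantCoeff hdb
  simp only [Polynomial.constantCoeff_apply, Polynomial.coeff_C_zero] at hca hcb
  exact (h hca hcb).map _

theorem IsRelPrime.rename_castSucc {A : Type*} [CommRing A] [IsDomain A] {n : ℕ}
    {a b : MvPolynomial (Fin n) A} (h : IsRelPrime a b) :
    IsRelPrime (rename Fin.castSucc a) (rename Fin.castSucc b) := by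
  let e := (renameEquiv A (finSuccEquiv' (Fin.last n))).trans (optionEquivLeft A (Fin n))
  have he : ∀ p, e (rename Fin.castSucc p) = Polynomial.C p := by
    intro p
    induction p using MvPolynomial.induction_on with
    | C a => simp [e]
    | add p q hp hq => simp only [map_add, hp, hq]
    | mul_X p i hp =>
      simp_all [e, finSuccEquiv'_last_apply_castSucc, optionEquivLeft_X_some]
  exact IsRelPrime.of_map e (by simpa only [he] using h.polynomial_C)

section Localization

variable {R L : Type*} [CommRing R] [CommRing L] [Algebra R L] {M : Submonoid R}
  [IsLocalization M L]

theorem IsRelPrime.of_algebraMap {a b : R}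
    (h : IsRelPrime (algebraMap R L a) (algebraMap R L b)) (ha : ∀ m ∈ M, IsRelPrime a m) :
    IsRelPrime a b := fun d hda hdb => by
  obtain ⟨m, hm, hdm⟩ :=
    (IsLocalization.algebraMap_isUnit_iff M).1 (h (map_dvd _ hda) (map_dvd _ hdb))
  exact ha m hm hda hdm

theorem IsRelPrime.algebraMap_of_isLocalization [IsDomain R] [UniqueFactorizationMonoid R]
    (hM : M ≤ nonZeroDivisors R) {a b : R} (h : IsRelPrime a b) :
    IsRelPrime (algebraMap R L a) (algebraMap R L b) := by
  intro d hda hdb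
  obtain ⟨⟨D, s⟩, hD⟩ := IsLocalization.surj M d
  have hdD : Associated d (algebraMap R L D) :=
    hD ▸ associated_mul_unit_right d _ (IsLocalization.map_units L s)
  rw [hdD.isUnit_iff]
  obtain ⟨s₁, hs₁, hDa⟩ :=
    (IsLocalization.toLocalizationMap M L).map_dvd_map.1 (hdD.symm.dvd.trans hda)
  obtain ⟨s₂, hs₂, hDb⟩ :=
    (IsLocalization.toLocalizationMap M L).map_dvd_map.1 (hdD.symm.dvd.trans hdb)
  clear hD hdD hda hdb
  -- A prime factor of `D` divides `s₁` or `s₂`, hence becomes a unit in `L`, or else it divides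
  -- both `a` and `b`.
  induction D using UniqueFactorizationMonoid.induction_on_prime with
  | h₁ =>
    have hs : ∀ s ∈ M, s ≠ 0 := fun s hs => nonZeroDivisors.ne_zero (hM hs)
    have ha : a = 0 := by simpa [hs s₁ hs₁] using hDa
    have hb : b = 0 := by simpa [hs s₂ hs₂] using hDb
    exact absurd (ha ▸ hb ▸ h) not_isRelPrime_zero_zero
  | h₂ x hx => exact hx.map _
  | h₃ D p _ hp ih =>
    rw [map_mul, IsUnit.mul_iff]
    refine ⟨?_, ih (dvd_of_mul_left_dvd hDa) (dvd_of_mul_left_dvd hDb)⟩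
    by_cases hps₁ : p ∣ s₁
    · exact (IsLocalization.algebraMap_isUnit_iff M).2 ⟨s₁, hs₁, hps₁⟩
    by_cases hps₂ : p ∣ s₂
    · exact (IsLocalization.algebraMap_isUnit_iff M).2 ⟨s₂, hs₂, hps₂⟩
    have hpa := (hp.dvd_or_dvd (dvd_of_mul_right_dvd hDa)).resolve_left hps₁
    have hpb := (hp.dvd_or_dvd (dvd_of_mul_right_dvd hDb)).resolve_left hps₂
    exact (h hpa hpb).map _

end Localization

namespace PoincareTransform

variable (n : ℕ)

def dehomFirst : Fin n → MvPolynomial (Fin (n + 1)) ℂ :=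
  fun i => if (i : ℕ) = 0 then 1 else X i.castSucc

abbrev Loc := Localization.Away (X 0 * X (Fin.last n) : MvPolynomial (Fin (n + 1)) ℂ)

local notation "ι" => algebraMap (MvPolynomial (Fin (n + 1)) ℂ) (Loc n)

lemma isUnit_algebraMap_X0 : IsUnit (ι (X 0)) :=
  IsLocalization.Away.isUnit_of_dvd _ (dvd_mul_right _ (X (Fin.last n)))

lemma isUnit_algebraMap_Xlast : IsUnit (ι (X (Fin.last n))) :=
  IsLocalization.Away.isUnit_of_dvd _ (dvd_mul_left _ (X 0))

def unitX0 : (Loc n)ˣ := (isUnit_algebraMap_X0 n).unit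

def unitXlast : (Loc n)ˣ := (isUnit_algebraMap_Xlast n).unit

@[simp] lemma coe_unitX0 : (unitX0 n : Loc n) = ι (X 0) := IsUnit.unit_spec _

@[simp] lemma coe_unitXlast : (unitXlast n : Loc n) = ι (X (Fin.last n)) := IsUnit.unit_spec _

def poincareSubst : MvPolynomial (Fin (n + 1)) ℂ →ₐ[ℂ] Loc n :=
  aeval fun j => if j = Fin.last n then ι (X 0)
    else if j = 0 then ↑(unitXlast n)⁻¹ else ι (X j) * ↑(unitXlast n)⁻¹

def poincareInvSubst : MvPolynomial (Fin (n + 1)) ℂ →ₐ[ℂ] Loc n :=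
  aeval fun j => if j = 0 then ι (X (Fin.last n))
    else if j = Fin.last n then ↑(unitX0 n)⁻¹ else ι (X j) * ↑(unitX0 n)⁻¹

variable {n}

lemma poincareT_eq (r : ℕ) (ψ : MvPolynomial (Fin n) ℂ) :
    poincareT n r ψ = ∑ j ∈ Finset.range (r + 1),
      aeval (dehomFirst n) (homogeneousComponent j ψ) * X (Fin.last n) ^ (r - j) := rfl

lemma powers_X0_mul_Xlast_le_nonZeroDivisors :
    Submonoid.powers (X 0 * X (Fin.last n) : MvPolynomial (Fin (n + 1)) ℂ) ≤
      nonZeroDivisors _ :=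
  powers_le_nonZeroDivisors_of_noZeroDivisors (mul_ne_zero (X_ne_zero 0) (X_ne_zero _))

lemma algebraMap_injective : Function.Injective ι :=
  IsLocalization.injective (Loc n) powers_X0_mul_Xlast_le_nonZeroDivisors

lemma algebraMap_rename_castSucc (h : MvPolynomial (Fin n) ℂ) :
    ι (rename Fin.castSucc h) = aeval (fun i => ι (X (Fin.castSucc i))) h := by
  rw [← IsScalarTower.coe_toAlgHom' ℂ, aeval_unique (IsScalarTower.toAlgHom ℂ _ (Loc n)),
    aeval_rename]
  simp only [aeval_X]
  rfl

lemma algebraMap_rename_castSucc_ne_zero {h : MvPolynomial (Fin n) ℂ} (h0 : h ≠ 0) :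
    ι (rename Fin.castSucc h) ≠ 0 :=
  (map_ne_zero_iff _ algebraMap_injective).2
    ((map_ne_zero_iff _ (rename_injective _ (Fin.castSucc_injective n))).2 h0)

@[simp] lemma poincareSubst_X_last : poincareSubst n (X (Fin.last n)) = ι (X 0) := by
  simp [poincareSubst]

lemma poincareSubst_X_of_ne {j : Fin (n + 1)} (h0 : j ≠ 0) (hl : j ≠ Fin.last n) :
    poincareSubst n (X j) = ι (X j) * ↑(unitXlast n)⁻¹ := by
  simp [poincareSubst, h0, hl]

@[simp] lemma poincareInvSubst_X_zero : poincareInvSubst n (X 0) = ι (X (Fin.last n)) := by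
  simp [poincareInvSubst]

lemma poincareInvSubst_X_of_ne {j : Fin (n + 1)} (h0 : j ≠ 0) (hl : j ≠ Fin.last n) :
    poincareInvSubst n (X j) = ι (X j) * ↑(unitX0 n)⁻¹ := by
  simp [poincareInvSubst, h0, hl]

lemma poincareInvSubst_dehomFirst (i : Fin n) :
    poincareInvSubst n (dehomFirst n i) = ↑(unitX0 n)⁻¹ * ι (X (Fin.castSucc i)) := by
  by_cases hi : (i : ℕ) = 0
  · have : Fin.castSucc i = 0 := Fin.ext hi
    simp [dehomFirst, hi, this, ← coe_unitX0]
  · have h0 : Fin.castSucc i ≠ 0 := fun h => hi (congrArg Fin.val h)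
    simp [dehomFirst, hi, poincareInvSubst_X_of_ne h0 (Fin.castSucc_lt_last i).ne, mul_comm]

lemma poincareInvSubst_aeval_dehomFirst {h : MvPolynomial (Fin n) ℂ} {j : ℕ}
    (hh : h.IsHomogeneous j) :
    poincareInvSubst n (aeval (dehomFirst n) h) * ↑(unitX0 n) ^ j =
      ι (rename Fin.castSucc h) := by
  rw [← AlgHom.comp_apply, comp_aeval]
  simp only [poincareInvSubst_dehomFirst, hh.aeval_mul_left, algebraMap_rename_castSucc]
  rw [mul_right_comm, ← mul_pow, Units.inv_mul, one_pow, one_mul]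

lemma aeval_dehomFirst_ne_zero {h : MvPolynomial (Fin n) ℂ} {j : ℕ} (hh : h.IsHomogeneous j)
    (h0 : h ≠ 0) : aeval (dehomFirst n) h ≠ 0 := fun hz =>
  algebraMap_rename_castSucc_ne_zero h0 <| by
    rw [← poincareInvSubst_aeval_dehomFirst hh, hz, map_zero, zero_mul]

lemma aeval_update_aeval_dehomFirst {k : Fin (n + 1)}
    (hk : ∀ i : Fin n, (i : ℕ) ≠ 0 → i.castSucc ≠ k) (h : MvPolynomial (Fin n) ℂ) :
    aeval (Function.update X k 0) (aeval (dehomFirst n) h) = aeval (dehomFirst n) h := by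
  rw [← AlgHom.comp_apply, comp_aeval]
  congr 2 with i
  by_cases hi : (i : ℕ) = 0
  · simp [dehomFirst, hi]
  · simp [dehomFirst, hi, Function.update_of_ne (hk i hi)]

lemma not_X_last_dvd_poincareT {ψ : MvPolynomial (Fin n) ℂ} (hψ : ψ ≠ 0) :
    ¬ X (Fin.last n) ∣ poincareT n ψ.totalDegree ψ := by
  intro hdvd
  have hk : ∀ i : Fin n, (i : ℕ) ≠ 0 → i.castSucc ≠ Fin.last n :=
    fun i _ => (Fin.castSucc_lt_last i).ne
  have := aeval_update_X_zero_of_X_dvd hdvd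
  simp only [poincareT_eq, map_sum, map_mul, map_pow, aeval_X, Function.update_self,
    aeval_update_aeval_dehomFirst hk] at this
  rw [Finset.sum_eq_single ψ.totalDegree (fun j hj hne => by
    rw [zero_pow (by simp only [Finset.mem_range] at hj; omega), mul_zero]) (by simp),
    Nat.sub_self, pow_zero, mul_one] at this
  exact aeval_dehomFirst_ne_zero (homogeneousComponent_isHomogeneous _ ψ)
    (homogeneousComponent_totalDegree_ne_zero_s6 hψ) this

variable [NeZero n]

lemma zero_ne_last : (0 : Fin (n + 1)) ≠ Fin.last n := Fin.last_pos'.ne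

@[simp] lemma poincareSubst_X_zero : poincareSubst n (X 0) = ↑(unitXlast n)⁻¹ := by
  simp [poincareSubst, NeZero.ne n]

@[simp] lemma poincareInvSubst_X_last :
    poincareInvSubst n (X (Fin.last n)) = ↑(unitX0 n)⁻¹ := by
  simp [poincareInvSubst, NeZero.ne n]

variable (n) in
def poincareSubstLoc : Loc n →+* Loc n :=
  IsLocalization.Away.lift (X 0 * X (Fin.last n)) (g := (poincareSubst n).toRingHom) <| by
    simpa using isUnit_algebraMap_X0 n

variable (n) in
def poincareInvSubstLoc : Loc n →+* Loc n :=
  IsLocalization.Away.lift (X 0 * X (Fin.last n)) (g := (poincareInvSubst n).toRingHom) <| by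
    simpa using isUnit_algebraMap_Xlast n

@[simp] lemma poincareSubstLoc_algebraMap (p : MvPolynomial (Fin (n + 1)) ℂ) :
    poincareSubstLoc n (ι p) = poincareSubst n p :=
  IsLocalization.Away.lift_eq _ _ _

@[simp] lemma poincareInvSubstLoc_algebraMap (p : MvPolynomial (Fin (n + 1)) ℂ) :
    poincareInvSubstLoc n (ι p) = poincareInvSubst n p :=
  IsLocalization.Away.lift_eq _ _ _

lemma poincareSubstLoc_unitX0_inv : poincareSubstLoc n ↑(unitX0 n)⁻¹ = unitXlast n := by
  have h : Units.map (poincareSubstLoc n : Loc n →* Loc n) (unitX0 n) = (unitXlast n)⁻¹ :=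
    Units.ext (by simp)
  rw [← MonoidHom.coe_coe, ← Units.coe_map_inv, h, inv_inv]

lemma poincareSubstLoc_comp_poincareInvSubstLoc :
    (poincareSubstLoc n).comp (poincareInvSubstLoc n) = RingHom.id (Loc n) := by
  refine IsLocalization.ringHom_ext
    (Submonoid.powers (X 0 * X (Fin.last n) : MvPolynomial (Fin (n + 1)) ℂ)) ?_
  refine MvPolynomial.ringHom_ext (fun c => ?_) (fun j => ?_)
  · simp [IsScalarTower.algebraMap_apply ℂ (MvPolynomial (Fin (n + 1)) ℂ) (Loc n)]
  · simp only [RingHom.comp_apply, poincareInvSubstLoc_algebraMap, RingHom.id_apply]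
    rcases eq_or_ne j 0 with rfl | h0
    · simp
    rcases eq_or_ne j (Fin.last n) with rfl | hl
    · simp [poincareSubstLoc_unitX0_inv]
    · simp [poincareInvSubst_X_of_ne h0 hl, poincareSubst_X_of_ne h0 hl,
        poincareSubstLoc_unitX0_inv, mul_assoc]
      rw [← coe_unitXlast, Units.inv_mul, mul_one]

lemma leftInverse_poincareSubstLoc :
    Function.LeftInverse (poincareSubstLoc n) (poincareInvSubstLoc n) := fun x => by
  rw [← RingHom.comp_apply, poincareSubstLoc_comp_poincareInvSubstLoc, RingHom.id_apply]

lemma poincareInvSubst_poincareT {r : ℕ} {ψ : MvPolynomial (Fin n) ℂ}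
    (hr : ψ.totalDegree ≤ r) :
    poincareInvSubst n (poincareT n r ψ) * ↑(unitX0 n) ^ r = ι (rename Fin.castSucc ψ) := by
  conv_rhs => rw [← sum_homogeneousComponent_of_totalDegree_le hr]
  rw [poincareT_eq, map_sum, Finset.sum_mul, map_sum, map_sum]
  refine Finset.sum_congr rfl fun j hj => ?_
  have hjr : j ≤ r := Nat.lt_succ_iff.1 (Finset.mem_range.1 hj)
  have hpow : (↑(unitX0 n)⁻¹ : Loc n) ^ (r - j) * ↑(unitX0 n) ^ r = ↑(unitX0 n) ^ j := by
    nth_rw 2 [← Nat.sub_add_cancel hjr]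
    rw [pow_add, ← mul_assoc, ← mul_pow, Units.inv_mul, one_pow, one_mul]
  rw [map_mul, map_pow, poincareInvSubst_X_last, mul_assoc, hpow,
    poincareInvSubst_aeval_dehomFirst (homogeneousComponent_isHomogeneous j ψ)]

lemma poincareT_ne_zero {r : ℕ} {ψ : MvPolynomial (Fin n) ℂ} (hψ : ψ ≠ 0)
    (hr : ψ.totalDegree ≤ r) : poincareT n r ψ ≠ 0 := fun hz =>
  algebraMap_rename_castSucc_ne_zero hψ <| by
    rw [← poincareInvSubst_poincareT hr, hz, map_zero, zero_mul]

lemma not_X_zero_dvd_poincareT {r : ℕ} {ψ : MvPolynomial (Fin n) ℂ} (hψ : ψ ≠ 0)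
    (hr : ψ.totalDegree ≤ r) : ¬ X 0 ∣ poincareT n r ψ := fun hdvd =>
  poincareT_ne_zero hψ hr <| by
    have hk : ∀ i : Fin n, (i : ℕ) ≠ 0 → i.castSucc ≠ 0 :=
      fun i hi h => hi (congrArg Fin.val h)
    simpa only [poincareT_eq, map_sum, map_mul, map_pow, aeval_X,
      aeval_update_aeval_dehomFirst hk, Function.update_of_ne zero_ne_last.symm]
      using aeval_update_X_zero_of_X_dvd hdvd

lemma isRelPrime_poincareT_X0_mul_Xlast {ψ : MvPolynomial (Fin n) ℂ} (hψ : ψ ≠ 0) :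
    IsRelPrime (poincareT n ψ.totalDegree ψ) (X 0 * X (Fin.last n)) := by
  have hX {j : Fin (n + 1)} (h : ¬ X j ∣ poincareT n ψ.totalDegree ψ) :
      IsRelPrime (poincareT n ψ.totalDegree ψ) (X j) :=
    (X_prime.irreducible.isRelPrime_iff_not_dvd.2 h).symm
  exact (hX (not_X_zero_dvd_poincareT hψ le_rfl)).mul_right (hX (not_X_last_dvd_poincareT hψ))

lemma poincareInvSubstLoc_algebraMap_poincareT (ψ : MvPolynomial (Fin n) ℂ) :
    poincareInvSubstLoc n (ι (poincareT n ψ.totalDegree ψ)) =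
      ι (rename Fin.castSucc ψ) * ↑(unitX0 n ^ ψ.totalDegree)⁻¹ := by
  rw [poincareInvSubstLoc_algebraMap, Units.eq_mul_inv_iff_mul_eq, Units.val_pow_eq_pow_val,
    poincareInvSubst_poincareT le_rfl]

theorem isRelPrime_poincareT {ψ₁ ψ₂ : MvPolynomial (Fin n) ℂ}
    (hrp : IsRelPrime ψ₁ ψ₂) :
    IsRelPrime (poincareT n ψ₁.totalDegree ψ₁) (poincareT n ψ₂.totalDegree ψ₂) := by
  have hloc : IsRelPrime (ι (rename Fin.castSucc ψ₁)) (ι (rename Fin.castSucc ψ₂)) :=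
    hrp.rename_castSucc.algebraMap_of_isLocalization powers_X0_mul_Xlast_le_nonZeroDivisors
  have : IsLocalHom (poincareInvSubstLoc n) :=
    isLocalHom_of_leftInverse (poincareSubstLoc n) leftInverse_poincareSubstLoc
  have hP : IsRelPrime (ι (poincareT n ψ₁.totalDegree ψ₁))
      (ι (poincareT n ψ₂.totalDegree ψ₂)) :=
    IsRelPrime.of_map (poincareInvSubstLoc n) <| by
      rwa [poincareInvSubstLoc_algebraMap_poincareT, poincareInvSubstLoc_algebraMap_poincareT,
        isRelPrime_mul_unit_right_left (Units.isUnit _),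
        isRelPrime_mul_unit_right_right (Units.isUnit _)]
  have hpowers {ψ : MvPolynomial (Fin n) ℂ} (hψ : ψ ≠ 0) :
      ∀ m ∈ Submonoid.powers (X 0 * X (Fin.last n) : MvPolynomial (Fin (n + 1)) ℂ),
        IsRelPrime (poincareT n ψ.totalDegree ψ) m := by
    rintro _ ⟨k, rfl⟩
    exact (isRelPrime_poincareT_X0_mul_Xlast hψ).pow_right
  rcases hrp.ne_zero_or_ne_zero with h₁ | h₂
  · exact hP.of_algebraMap (hpowers h₁)
  · exact (hP.symm.of_algebraMap (hpowers h₂)).symm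

end PoincareTransform

theorem isRelPrime_poincareT_zero {ψ₁ ψ₂ : MvPolynomial (Fin 0) ℂ}
    (hrp : IsRelPrime ψ₁ ψ₂) :
    IsRelPrime (poincareT 0 ψ₁.totalDegree ψ₁) (poincareT 0 ψ₂.totalDegree ψ₂) := by
  obtain ⟨c₁, rfl⟩ := C_surjective (Fin 0) ψ₁
  obtain ⟨c₂, rfl⟩ := C_surjective (Fin 0) ψ₂
  have hC : ∀ c : ℂ, poincareT 0 (C c : MvPolynomial (Fin 0) ℂ).totalDegree (C c) = C c := by
    simp [poincareT, homogeneousComponent_zero, algebraMap_eq]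
  rw [hC, hC]
  rcases hrp.ne_zero_or_ne_zero with h | h
  · exact ((isUnit_iff_ne_zero.2 (C_ne_zero.1 h)).map C).isRelPrime_left
  · exact ((isUnit_iff_ne_zero.2 (C_ne_zero.1 h)).map C).isRelPrime_right

theorem stmt6_general (n r₁ r₂ : ℕ) (ψ₁ ψ₂ : MvPolynomial (Fin n) ℂ)
    (hrp : IsRelPrime ψ₁ ψ₂)
    (hdeg1 : ψ₁.totalDegree = r₁) (hdeg2 : ψ₂.totalDegree = r₂) :
    IsRelPrime (poincareT n r₁ ψ₁) (poincareT n r₂ ψ₂) := by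
  subst hdeg1 hdeg2
  rcases eq_zero_or_neZero n with rfl | _
  · exact isRelPrime_poincareT_zero hrp
  · exact PoincareTransform.isRelPrime_poincareT hrp

/-- If `ψ_1, ψ_2` are relatively prime polynomials of degrees `r_1, r_2` whose top
homogeneous parts both vanish at `e_1`, then the Poincaré transforms `ψ_1*_{e_1}` and
`ψ_2*_{e_1}` are relatively prime. -/
theorem stmt6 (n r₁ r₂ : ℕ) (ψ₁ ψ₂ : MvPolynomial (Fin n) ℂ)
    (hrp : IsRelPrime ψ₁ ψ₂)
    (hdeg1 : ψ₁.totalDegree = r₁) (hdeg2 : ψ₂.totalDegree = r₂)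
    (htop1 : eval (e1vec n) (homogeneousComponent r₁ ψ₁) = 0)
    (htop2 : eval (e1vec n) (homogeneousComponent r₂ ψ₂) = 0) :
    IsRelPrime (poincareT n r₁ ψ₁) (poincareT n r₂ ψ₂) :=
  stmt6_general n r₁ r₂ ψ₁ ψ₂ hrp hdeg1 hdeg2
end
end
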